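/- Let n ≥ 1, let Ω ⊆ ℝⁿ be open and let w : Ω → ℝ be a C³ function satisfying −Δ_{φₙ} w − w = 1 on Ω. Then Δ_{φₙ}(|∇w|²) ≥ 0 at every point of Ω, and for each x ∈ Ω equality Δ_{φₙ}(|∇w|²)(x) = 0 holds if and only if the Hessian ∇²w vanishes at x. -/

import Mathlib

/-!
Since `∇φₙ(x) = x` and `Hess φₙ = I`, Bochner's formula for the weighted Laplacian reads
`Δ_φ |∇w|² = 2 |∇²w|² + 2 ⟨∇w, ∇(Δ_φ w)⟩ + 2 |∇w|²`.
Differentiating the equation `Δ_φ w = -w - 1` gives `∇(Δ_φ w) = -∇w`, so the last two terms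
cancel and `Δ_φ |∇w|² = 2 |∇²w|²`, a sum of squares of the Hessian entries.
-/

noncomputable section

open scoped BigOperators

/-- Euclidean space ℝⁿ. -/
abbrev En (n : ℕ) := EuclideanSpace ℝ (Fin n)

/-- The (unweighted) divergence of a vector field on ℝⁿ: div Y = ∑ᵢ ∂ᵢYᵢ. -/
noncomputable def ediv {n : ℕ} (Y : En n → En n) (x : En n) : ℝ :=
  ∑ i, fderiv ℝ Y x (EuclideanSpace.single i 1) i

/-- The Laplacian Δf = div ∇f. -/
noncomputable def lap {n : ℕ} (f : En n → ℝ) (x : En n) : ℝ :=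
  ediv (fun y => gradient f y) x

/-- Weighted Laplacian: Δ_φ u = Δu − ⟨∇φ, ∇u⟩. -/
noncomputable def lapW {n : ℕ} (φ : En n → ℝ) (f : En n → ℝ) (x : En n) : ℝ :=
  lap f x - (inner ℝ (gradient φ x) (gradient f x) : ℝ)

/-- The Gaussian weight φₙ(x) = |x|²/2 + (n/2)·log(2π). -/
noncomputable def gaussW (n : ℕ) (x : En n) : ℝ :=
  ‖x‖ ^ 2 / 2 + (n / 2 : ℝ) * Real.log (2 * Real.pi)

/-- The (i,j)-entry of the Hessian of `f` at `x`: ∂ᵢ( (∇f)ⱼ ). -/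
noncomputable def hessC {n : ℕ} (f : En n → ℝ) (x : En n) (i j : Fin n) : ℝ :=
  fderiv ℝ (fun y => gradient f y j) x (EuclideanSpace.single i 1)

open Filter Topology

section

variable {n : ℕ}

def partialDeriv (f : En n → ℝ) (i : Fin n) (y : En n) : ℝ :=
  fderiv ℝ f y (EuclideanSpace.single i 1)

lemma gradient_apply (f : En n → ℝ) (x : En n) (j : Fin n) :
    gradient f x j = partialDeriv f j x := by
  rw [partialDeriv, ← inner_gradient_left, EuclideanSpace.inner_single_right]
  simp

lemma gradient_eq_partialDeriv (f : En n → ℝ) (j : Fin n) :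
    (fun y => gradient f y j) = partialDeriv f j :=
  funext fun y => gradient_apply f y j

lemma hessC_eq_partialDeriv (f : En n → ℝ) (x : En n) (i j : Fin n) :
    hessC f x i j = partialDeriv (partialDeriv f j) i x := by
  rw [hessC, gradient_eq_partialDeriv]
  rfl

lemma norm_gradient_sq_eq_sum (f : En n → ℝ) :
    (fun y => ‖gradient f y‖ ^ 2) = fun y => ∑ j, partialDeriv f j y ^ 2 := by
  funext y
  simp only [EuclideanSpace.real_norm_sq_eq, gradient_apply]

lemma real_inner_eq_sum (u v : En n) : inner ℝ u v = ∑ i, u i * v i := by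
  simp [PiLp.inner_apply, mul_comm]

lemma Filter.EventuallyEq.partialDeriv_eq {f g : En n → ℝ} {x : En n} (h : f =ᶠ[𝓝 x] g)
    (i : Fin n) : partialDeriv f i x = partialDeriv g i x := by
  rw [partialDeriv, h.fderiv_eq, partialDeriv]

lemma partialDeriv_sub {f g : En n → ℝ} {y : En n} (hf : DifferentiableAt ℝ f y)
    (hg : DifferentiableAt ℝ g y) (i : Fin n) :
    partialDeriv (fun z => f z - g z) i y = partialDeriv f i y - partialDeriv g i y := by
  simp [partialDeriv, fderiv_fun_sub hf hg]

lemma partialDeriv_mul {f g : En n → ℝ} {y : En n} (hf : DifferentiableAt ℝ f y)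
    (hg : DifferentiableAt ℝ g y) (i : Fin n) :
    partialDeriv (fun z => f z * g z) i y
      = f y * partialDeriv g i y + g y * partialDeriv f i y := by
  simp [partialDeriv, fderiv_fun_mul hf hg]

lemma partialDeriv_const_mul {f : En n → ℝ} {y : En n} (hf : DifferentiableAt ℝ f y) (c : ℝ)
    (i : Fin n) : partialDeriv (fun z => c * f z) i y = c * partialDeriv f i y := by
  simp [partialDeriv, fderiv_const_mul hf]

lemma partialDeriv_sq {f : En n → ℝ} {y : En n} (hf : DifferentiableAt ℝ f y) (i : Fin n) :
    partialDeriv (fun z => f z ^ 2) i y = 2 * f y * partialDeriv f i y := by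
  simp [partialDeriv, fderiv_fun_pow 2 hf, mul_assoc]

lemma partialDeriv_sum {m : ℕ} {F : Fin m → En n → ℝ} {y : En n}
    (hF : ∀ j, DifferentiableAt ℝ (F j) y) (i : Fin n) :
    partialDeriv (fun z => ∑ j, F j z) i y = ∑ j, partialDeriv (F j) i y := by
  simp [partialDeriv, fderiv_fun_sum fun j _ => hF j]

lemma partialDeriv_const (c : ℝ) (i : Fin n) (y : En n) :
    partialDeriv (fun _ => c) i y = 0 := by
  simp [partialDeriv]

lemma partialDeriv_coord (j i : Fin n) (y : En n) :
    partialDeriv (fun z : En n => z j) i y = if j = i then 1 else 0 := by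
  rw [partialDeriv, show (fun z : En n => z j) = (EuclideanSpace.proj j : En n →L[ℝ] ℝ) from rfl,
    ContinuousLinearMap.fderiv]
  simp

lemma ContDiffAt.partialDeriv {f : En n → ℝ} {x : En n} {m : ℕ}
    (hf : ContDiffAt ℝ (m + 1) f x) (i : Fin n) : ContDiffAt ℝ m (partialDeriv f i) x :=
  (ContinuousLinearMap.apply ℝ ℝ _).contDiff.contDiffAt.comp x
    (hf.fderiv_right (by norm_cast))

lemma ContDiffAt.differentiableAt_fderiv {f : En n → ℝ} {x : En n} (hf : ContDiffAt ℝ 2 f x) :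
    DifferentiableAt ℝ (fderiv ℝ f) x :=
  (hf.fderiv_right (m := 1) le_rfl).differentiableAt one_ne_zero

lemma partialDeriv_partialDeriv_eq_fderiv_fderiv {f : En n → ℝ} {x : En n}
    (hf : DifferentiableAt ℝ (fderiv ℝ f) x) (i j : Fin n) :
    partialDeriv (partialDeriv f j) i x
      = fderiv ℝ (fderiv ℝ f) x (EuclideanSpace.single i 1) (EuclideanSpace.single j 1) := by
  unfold partialDeriv
  rw [fderiv_clm_apply hf (differentiableAt_const _)]
  simp

lemma partialDeriv_comm {f : En n → ℝ} {x : En n} (hf : ContDiffAt ℝ 2 f x) (i j : Fin n) :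
    partialDeriv (partialDeriv f j) i x = partialDeriv (partialDeriv f i) j x := by
  rw [partialDeriv_partialDeriv_eq_fderiv_fderiv hf.differentiableAt_fderiv,
    partialDeriv_partialDeriv_eq_fderiv_fderiv hf.differentiableAt_fderiv]
  exact hf.isSymmSndFDerivAt (by simp) _ _

lemma ediv_eq_sum {Y : En n → En n} {x : En n} (hY : DifferentiableAt ℝ Y x) :
    ediv Y x = ∑ i, partialDeriv (fun y => Y y i) i x := by
  refine Finset.sum_congr rfl fun i _ => ?_
  rw [partialDeriv, show (fun y => Y y i) = (EuclideanSpace.proj i : En n →L[ℝ] ℝ) ∘ Y from rfl,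
    fderiv_comp x (EuclideanSpace.proj i).differentiableAt hY, ContinuousLinearMap.fderiv]
  rfl

lemma ContDiffAt.differentiableAt_gradient {f : En n → ℝ} {x : En n} (hf : ContDiffAt ℝ 2 f x) :
    DifferentiableAt ℝ (gradient f) x :=
  ((InnerProductSpace.toDual ℝ (En n)).symm.toContinuousLinearEquiv
    : (En n →L[ℝ] ℝ) ≃L[ℝ] En n).differentiableAt.comp x hf.differentiableAt_fderiv

lemma lap_eq_sum {f : En n → ℝ} {x : En n} (hf : ContDiffAt ℝ 2 f x) :
    lap f x = ∑ i, partialDeriv (partialDeriv f i) i x := by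
  simp only [lap, ediv_eq_sum hf.differentiableAt_gradient, gradient_eq_partialDeriv]

lemma lap_eventuallyEq_sum {f : En n → ℝ} {x : En n} (hf : ContDiffAt ℝ 2 f x) :
    lap f =ᶠ[𝓝 x] fun y => ∑ i, partialDeriv (partialDeriv f i) i y := by
  filter_upwards [hf.eventually (by simp)] with y hy using lap_eq_sum hy

lemma partialDeriv_partialDeriv_eventuallyEq_swap {f : En n → ℝ} {x : En n}
    (hf : ContDiffAt ℝ 2 f x) (i j : Fin n) :
    partialDeriv (partialDeriv f j) i =ᶠ[𝓝 x] partialDeriv (partialDeriv f i) j := by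
  filter_upwards [hf.eventually (by simp)] with y hy using partialDeriv_comm hy i j

lemma partialDeriv_lap_eq_sum {f : En n → ℝ} {x : En n} (hf : ContDiffAt ℝ 3 f x) (j : Fin n) :
    partialDeriv (lap f) j x
      = ∑ i, partialDeriv (partialDeriv (partialDeriv f j) i) i x := by
  have hD : ∀ i, ContDiffAt ℝ 2 (partialDeriv f i) x := fun i => hf.partialDeriv i
  rw [(lap_eventuallyEq_sum (hf.of_le (by norm_num))).partialDeriv_eq,
    partialDeriv_sum fun i => ((hD i).partialDeriv (m := 1) i).differentiableAt one_ne_zero]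
  refine Finset.sum_congr rfl fun i _ => ?_
  rw [partialDeriv_comm (hD i), ((partialDeriv_partialDeriv_eventuallyEq_swap
    (hf.of_le (by norm_num)) j i)).partialDeriv_eq]

lemma partialDeriv_norm_gradient_sq {f : En n → ℝ} {y : En n} (hf : ContDiffAt ℝ 2 f y)
    (i : Fin n) :
    partialDeriv (fun z => ‖gradient f z‖ ^ 2) i y
      = 2 * ∑ j, partialDeriv f j y * partialDeriv (partialDeriv f j) i y := by
  have hD : ∀ j, DifferentiableAt ℝ (partialDeriv f j) y := fun j =>
    (hf.partialDeriv (m := 1) j).differentiableAt one_ne_zero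
  rw [norm_gradient_sq_eq_sum,
    partialDeriv_sum (F := fun j z => partialDeriv f j z ^ 2) fun j => (hD j).pow 2, Finset.mul_sum]
  exact Finset.sum_congr rfl fun j _ => by rw [partialDeriv_sq (hD j)]; ring

lemma lap_norm_gradient_sq {f : En n → ℝ} {x : En n} (hf : ContDiffAt ℝ 3 f x) :
    lap (fun y => ‖gradient f y‖ ^ 2) x
      = 2 * ∑ i, ∑ j, hessC f x i j ^ 2
        + 2 * ∑ j, partialDeriv f j x * partialDeriv (lap f) j x := by
  have hD : ∀ j, ContDiffAt ℝ 2 (partialDeriv f j) x := fun j => hf.partialDeriv j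
  have hD' : ∀ j, DifferentiableAt ℝ (partialDeriv f j) x := fun j =>
    (hD j).differentiableAt two_ne_zero
  have hDD : ∀ i j, DifferentiableAt ℝ (partialDeriv (partialDeriv f j) i) x := fun i j =>
    ((hD j).partialDeriv (m := 1) i).differentiableAt one_ne_zero
  have hg : ContDiffAt ℝ 2 (fun y => ‖gradient f y‖ ^ 2) x := by
    rw [norm_gradient_sq_eq_sum]
    exact ContDiffAt.sum fun j _ => (hD j).pow 2
  have hdg : ∀ i, partialDeriv (fun y => ‖gradient f y‖ ^ 2) i =ᶠ[𝓝 x]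
      fun y => 2 * ∑ j, partialDeriv f j y * partialDeriv (partialDeriv f j) i y := fun i => by
    filter_upwards [hf.eventually (by simp)] with y hy
    exact partialDeriv_norm_gradient_sq (hy.of_le (by norm_num)) i
  have hddg : ∀ i, partialDeriv (partialDeriv (fun y => ‖gradient f y‖ ^ 2) i) i x
      = 2 * ∑ j, (hessC f x i j ^ 2
          + partialDeriv f j x * partialDeriv (partialDeriv (partialDeriv f j) i) i x) := by
    intro i
    rw [(hdg i).partialDeriv_eq, partialDeriv_const_mul (DifferentiableAt.fun_sum
      fun j _ => (hD' j).fun_mul (hDD i j)), partialDeriv_sum fun j => (hD' j).fun_mul (hDD i j)]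
    congr 1
    refine Finset.sum_congr rfl fun j _ => ?_
    rw [partialDeriv_mul (hD' j) (hDD i j), hessC_eq_partialDeriv]
    ring
  simp only [lap_eq_sum hg, hddg, partialDeriv_lap_eq_sum hf, Finset.mul_sum, mul_add,
    Finset.sum_add_distrib]
  congr 1
  exact Finset.sum_comm

lemma gradient_gaussW (x : En n) : gradient (gaussW n) x = x := by
  have hφ : gaussW n = fun y => ‖y‖ ^ 2 * (1 / 2) + (n / 2 : ℝ) * Real.log (2 * Real.pi) := by
    funext y
    rw [gaussW]
    ring
  refine HasGradientAt.gradient (hasGradientAt_iff_hasFDerivAt.2 ?_)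
  rw [hφ]
  refine ((hasStrictFDerivAt_norm_sq x).hasFDerivAt.mul_const _).add_const _ |>.congr_fderiv ?_
  ext v
  simp

lemma lapW_gaussW_eq (f : En n → ℝ) :
    lapW (gaussW n) f = fun y => lap f y - inner ℝ y (gradient f y) := by
  funext y
  rw [lapW, gradient_gaussW]

lemma partialDeriv_inner_self_gradient {f : En n → ℝ} {x : En n} (hf : ContDiffAt ℝ 2 f x)
    (j : Fin n) :
    partialDeriv (fun y => inner ℝ y (gradient f y)) j x
      = partialDeriv f j x + ∑ i, x i * partialDeriv (partialDeriv f i) j x := by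
  have hcoord : ∀ i, DifferentiableAt ℝ (fun y : En n => y i) x := fun i =>
    (EuclideanSpace.proj i : En n →L[ℝ] ℝ).differentiableAt
  have hD : ∀ i, DifferentiableAt ℝ (partialDeriv f i) x := fun i =>
    (hf.partialDeriv (m := 1) i).differentiableAt one_ne_zero
  simp only [real_inner_eq_sum, gradient_apply]
  rw [partialDeriv_sum fun i => (hcoord i).fun_mul (hD i)]
  simp only [partialDeriv_mul (hcoord _) (hD _), partialDeriv_coord, mul_ite, mul_one, mul_zero,
    Finset.sum_add_distrib, Finset.sum_ite_eq', Finset.mem_univ, if_true]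
  ring

lemma inner_gradient_norm_gradient_sq {f : En n → ℝ} {x : En n} (hf : ContDiffAt ℝ 2 f x) :
    inner ℝ x (gradient (fun y => ‖gradient f y‖ ^ 2) x)
      = 2 * ∑ j, partialDeriv f j x
          * (partialDeriv (fun y => inner ℝ y (gradient f y)) j x - partialDeriv f j x) := by
  simp only [partialDeriv_inner_self_gradient hf, add_sub_cancel_left]
  simp only [real_inner_eq_sum, gradient_apply, partialDeriv_norm_gradient_sq hf, Finset.mul_sum]
  rw [Finset.sum_comm]
  refine Finset.sum_congr rfl fun j _ => Finset.sum_congr rfl fun i _ => ?_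
  rw [partialDeriv_comm hf i j]
  ring

lemma lapW_gaussW_norm_gradient_sq {f : En n → ℝ} {x : En n} (hf : ContDiffAt ℝ 3 f x) :
    lapW (gaussW n) (fun y => ‖gradient f y‖ ^ 2) x
      = 2 * ∑ i, ∑ j, hessC f x i j ^ 2
        + 2 * ∑ j, partialDeriv f j x * partialDeriv (lapW (gaussW n) f) j x
        + 2 * ‖gradient f x‖ ^ 2 := by
  have hf2 : ContDiffAt ℝ 2 f x := hf.of_le (by norm_num)
  have hlap : DifferentiableAt ℝ (lap f) x :=
    (lap_eventuallyEq_sum hf2).differentiableAt_iff.2 <| DifferentiableAt.fun_sum fun i _ =>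
      (((hf.partialDeriv i).partialDeriv (m := 1) i).differentiableAt one_ne_zero)
  have hdrift : DifferentiableAt ℝ (fun y => inner ℝ y (gradient f y)) x :=
    differentiableAt_id.inner ℝ hf2.differentiableAt_gradient
  rw [lapW, gradient_gaussW, lapW_gaussW_eq, lap_norm_gradient_sq hf,
    inner_gradient_norm_gradient_sq hf2, congrFun (norm_gradient_sq_eq_sum f) x]
  simp only [partialDeriv_sub hlap hdrift, mul_sub, Finset.sum_sub_distrib, sq]
  ring

lemma lapW_gaussW_norm_gradient_sq_of_neg_lapW_sub_eq {f : En n → ℝ} {x : En n} {c : ℝ}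
    (hf : ContDiffAt ℝ 3 f x) (hpde : ∀ᶠ y in 𝓝 x, -lapW (gaussW n) f y - f y = c) :
    lapW (gaussW n) (fun y => ‖gradient f y‖ ^ 2) x = 2 * ∑ i, ∑ j, hessC f x i j ^ 2 := by
  have hL : lapW (gaussW n) f =ᶠ[𝓝 x] fun y => -c - f y := hpde.mono fun y hy => by linarith
  rw [lapW_gaussW_norm_gradient_sq hf, congrFun (norm_gradient_sq_eq_sum f) x]
  simp only [hL.partialDeriv_eq, partialDeriv_sub (differentiableAt_const _)
    (hf.differentiableAt (by norm_num)), partialDeriv_const, zero_sub, mul_neg,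
    Finset.sum_neg_distrib, sq]
  ring

end

lemma sum_sum_sq_eq_zero_iff {ι κ R : Type*} [Fintype ι] [Fintype κ] [CommRing R] [LinearOrder R]
    [IsStrictOrderedRing R] (a : ι → κ → R) :
    ∑ i, ∑ j, a i j ^ 2 = 0 ↔ ∀ i j, a i j = 0 := by
  rw [Fintype.sum_eq_zero_iff_of_nonneg fun i => Finset.sum_nonneg fun j _ => sq_nonneg _]
  simp only [funext_iff, Pi.zero_apply,
    Fintype.sum_eq_zero_iff_of_nonneg fun j => sq_nonneg _, sq_eq_zero_iff]

theorem stmt3_general (n : ℕ) (Ω : Set (En n)) (hΩ : IsOpen Ω)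
    (w : En n → ℝ) (hw : ContDiffOn ℝ 3 w Ω)
    (hpde : ∀ x ∈ Ω, -lapW (gaussW n) w x - w x = 1) :
    ∀ x ∈ Ω,
      0 ≤ lapW (gaussW n) (fun y => ‖gradient w y‖ ^ 2) x
      ∧ (lapW (gaussW n) (fun y => ‖gradient w y‖ ^ 2) x = 0
          ↔ ∀ i j, hessC w x i j = 0) := by
  intro x hx
  rw [lapW_gaussW_norm_gradient_sq_of_neg_lapW_sub_eq (hw.contDiffAt (hΩ.mem_nhds hx))
    (eventually_of_mem (hΩ.mem_nhds hx) hpde)]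
  refine ⟨by positivity, ?_⟩
  rw [mul_eq_zero, sum_sum_sq_eq_zero_iff]
  simp

/-- if `w` is a C³ solution of −Δ_{φₙ}w − w = 1 on an open set Ω, then
Δ_{φₙ}(|∇w|²) ≥ 0 on Ω, with equality at x ∈ Ω iff the Hessian of `w` vanishes at x. -/
theorem stmt3 (n : ℕ) (hn : 1 ≤ n) (Ω : Set (En n)) (hΩ : IsOpen Ω)
    (w : En n → ℝ) (hw : ContDiffOn ℝ 3 w Ω)
    (hpde : ∀ x ∈ Ω, -lapW (gaussW n) w x - w x = 1) :
    ∀ x ∈ Ω,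
      0 ≤ lapW (gaussW n) (fun y => ‖gradient w y‖ ^ 2) x
      ∧ (lapW (gaussW n) (fun y => ‖gradient w y‖ ^ 2) x = 0
          ↔ ∀ i j, hessC w x i j = 0) :=
  stmt3_general n Ω hΩ w hw hpde
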